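/- Let X_S^T X_S be nonsingular and let b*_S minimize ‖X_S b_S‖₂ subject to ‖b_S‖₁ = 1. Then every entry of b*_S is nonzero. -/

import Mathlib

open Finset

noncomputable def l1 {p : ℕ} (b : Fin p → ℝ) : ℝ := ∑ j, |b j|

def restr {p : ℕ} (S : Finset (Fin p)) (b : Fin p → ℝ) : Fin p → ℝ :=
  fun j => if j ∈ S then b j else 0

noncomputable def qf {n p : ℕ} (X : Matrix (Fin n) (Fin p) ℝ) (b : Fin p → ℝ) : ℝ :=
  ∑ i, (X.mulVec b i) ^ 2

/-- The compatibility constant κ̂(v,S) (square root of the minimal value). -/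
noncomputable def kappaHat {n p : ℕ} (X : Matrix (Fin n) (Fin p) ℝ) (S : Finset (Fin p))
    (v : ℝ) : ℝ :=
  Real.sqrt (sInf {c : ℝ | ∃ b : Fin p → ℝ,
    l1 (restr S b) - v * l1 (restr Sᶜ b) = 1 ∧ c = (S.card : ℝ) * qf X b / n})

/-!
If a minimiser `b` of `‖X b‖²` on the unit `ℓ₁`-sphere had `b j = 0`, moving mass `t` onto
coordinate `j` (with the better of the two signs, by the parallelogram law) raises `‖·‖₁` to
`1 + t` but `‖X ·‖²` only to at most `‖X b‖² + O(t²)`; after rescaling back to the sphere the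
value is about `‖X b‖² (1 - 2t)`, strictly smaller as soon as `‖X b‖ > 0`, which nonsingularity
of `XᵀX` guarantees.
-/

section QuadraticForm

variable {n p : ℕ} (X : Matrix (Fin n) (Fin p) ℝ)

lemma qf_nonneg (b : Fin p → ℝ) : 0 ≤ qf X b :=
  Finset.sum_nonneg fun _ _ => sq_nonneg _

lemma qf_smul (c : ℝ) (b : Fin p → ℝ) : qf X (c • b) = c ^ 2 * qf X b := by
  simp only [qf, Matrix.mulVec_smul, Pi.smul_apply, smul_eq_mul, mul_pow, Finset.mul_sum]

lemma qf_add_add_qf_sub (v w : Fin p → ℝ) :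
    qf X (v + w) + qf X (v - w) = 2 * (qf X v + qf X w) := by
  simp only [qf, Matrix.mulVec_add, Matrix.mulVec_sub, Pi.add_apply, Pi.sub_apply,
    ← Finset.sum_add_distrib, Finset.mul_sum]
  exact Finset.sum_congr rfl fun _ _ => by ring

lemma qf_pos_of_isUnit_det (hX : IsUnit (X.transpose * X).det) {b : Fin p → ℝ} (hb : b ≠ 0) :
    0 < qf X b := by
  refine (qf_nonneg X b).lt_of_ne' fun hzero => hb ?_
  have hXb : X.mulVec b = 0 := funext fun i =>
    pow_eq_zero_iff two_ne_zero |>.mp <|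
      (Finset.sum_eq_zero_iff_of_nonneg fun i _ => sq_nonneg (X.mulVec b i)).mp hzero i
        (Finset.mem_univ i)
  have hinj : Function.Injective (X.transpose * X).mulVec :=
    Matrix.mulVec_injective_iff_isUnit.mpr ((Matrix.isUnit_iff_isUnit_det _).mpr hX)
  exact hinj (by simp [← Matrix.mulVec_mulVec, hXb])

end QuadraticForm

lemma sum_abs_smul {p : ℕ} (c : ℝ) (b : Fin p → ℝ) : ∑ k, |(c • b) k| = |c| * ∑ k, |b k| := by
  simp only [Pi.smul_apply, smul_eq_mul, abs_mul, Finset.mul_sum]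

lemma sum_abs_add_single_of_eq_zero {p : ℕ} {b : Fin p → ℝ} {j : Fin p} (hj : b j = 0) (c : ℝ) :
    ∑ k, |(b + Pi.single j c : Fin p → ℝ) k| = ∑ k, |b k| + |c| := by
  have hsplit : ∀ k,
      |(b + Pi.single j c : Fin p → ℝ) k| = |b k| + (Pi.single j |c| : Fin p → ℝ) k := by
    intro k
    by_cases hk : k = j
    · subst hk; simp [hj]
    · simp [hk]
  simp only [hsplit, Finset.sum_add_distrib, Fintype.sum_pi_single']

lemma exists_sum_abs_eq_one_qf_le {n p : ℕ} (X : Matrix (Fin n) (Fin p) ℝ) {b : Fin p → ℝ}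
    (hb : ∑ k, |b k| = 1) {j : Fin p} (hj : b j = 0) {t : ℝ} (ht : 0 < t) :
    ∃ b' : Fin p → ℝ, ∑ k, |b' k| = 1 ∧
      qf X b' ≤ (qf X b + t ^ 2 * qf X (Pi.single j 1)) / (1 + t) ^ 2 := by
  set w : Fin p → ℝ := Pi.single j t
  have hw : qf X w = t ^ 2 * qf X (Pi.single j 1) := by
    rw [← qf_smul, ← Pi.single_smul, smul_eq_mul, mul_one]
  obtain ⟨c, hc, hqc⟩ : ∃ c : ℝ, |c| = t ∧ qf X (b + Pi.single j c) ≤ qf X b + qf X w := by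
    by_contra! hcon
    have hplus := hcon t (abs_of_pos ht)
    have hminus := hcon (-t) (by rw [abs_neg, abs_of_pos ht])
    rw [Pi.single_neg, ← sub_eq_add_neg] at hminus
    linarith [qf_add_add_qf_sub X b w]
  have h1t : 0 < 1 + t := by linarith
  refine ⟨(1 + t)⁻¹ • (b + Pi.single j c), ?_, ?_⟩
  · rw [sum_abs_smul, sum_abs_add_single_of_eq_zero hj, hb, hc, abs_of_pos (inv_pos.mpr h1t),
      inv_mul_cancel₀ h1t.ne']
  · rw [qf_smul, inv_pow, inv_mul_eq_div, ← hw]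
    gcongr

theorem ne_zero_of_minimizes_qf_on_l1_sphere {n p : ℕ} (X : Matrix (Fin n) (Fin p) ℝ)
    {b : Fin p → ℝ} (hb : ∑ k, |b k| = 1)
    (hmin : ∀ b' : Fin p → ℝ, ∑ k, |b' k| = 1 → qf X b ≤ qf X b') (hpos : 0 < qf X b)
    (j : Fin p) : b j ≠ 0 := by
  intro hj
  set Q := qf X b
  set N := qf X (Pi.single j (1 : ℝ))
  have hN := qf_nonneg X (Pi.single j (1 : ℝ))
  -- any `0 < t < 2Q / N` makes the bound below `Q`
  set t := Q / (N + 1)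
  have ht : 0 < t := by positivity
  have hNt : N * t < Q := by
    rw [← mul_div_assoc, div_lt_iff₀ (by linarith)]
    nlinarith
  obtain ⟨b', hb', hqb'⟩ := exists_sum_abs_eq_one_qf_le X hb hj ht
  have hlt : (Q + t ^ 2 * N) / (1 + t) ^ 2 < Q := by
    rw [div_lt_iff₀ (by positivity)]
    nlinarith
  linarith [hmin b' hb']

theorem stmt5 {n s : ℕ} (XS : Matrix (Fin n) (Fin s) ℝ)
    (hns : IsUnit (XS.transpose * XS).det)
    (bstar : Fin s → ℝ)
    (hcon : ∑ j, |bstar j| = 1)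
    (hmin : ∀ b : Fin s → ℝ, (∑ j, |b j|) = 1 →
      Real.sqrt (qf XS bstar) ≤ Real.sqrt (qf XS b)) :
    ∀ j, bstar j ≠ 0 := by
  have hbstar : bstar ≠ 0 := by
    rintro rfl
    simp at hcon
  refine ne_zero_of_minimizes_qf_on_l1_sphere XS hcon (fun b hb => ?_)
    (qf_pos_of_isUnit_det XS hns hbstar)
  exact (Real.sqrt_le_sqrt_iff (qf_nonneg XS b)).mp (hmin b hb)
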